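/- Let H be a connected graph and let H' be obtained from H by adding five new vertices x, u_1, v_1, x_1, v_1' together with the following new edges: a u_1, u_1 x, x v_1, v_1 b, where a and b are distinct vertices of H; an edge e_0 joining x to a vertex of H; two edges e_0', e_1' joining x_1 to two distinct vertices of H; and the edges x_1 v_1' and v_1' b', where b' is a vertex of H. Then rc(H') ≤ rc(H) + 3. -/

import Mathlib

/-!
Colour `H` rainbow with the colours `0, …, k - 1`, `k = rc H`. Each new vertex has a *spoke*, an
edge to `H`: the spokes of `x, u₁, v₁` get colour `k` and those of `x₁, v₁'` colour `k + 1`;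
moreover `u₁x` and `x₁v₁'` get colour `k + 1` and `xv₁` gets colour `k + 2`. Two new vertices
whose spokes have different colours are joined by spoke, rainbow path of `H`, spoke; the pairs with
equal spoke colours are joined inside the new part (`x u₁`, `x v₁`, `u₁ x v₁`, `x₁ v₁'`).

When `H` has no rainbow colouring with finitely many colours (so `rc H = 0`), neither has `H'`.
Collapse each new vertex onto an old one and replace every new edge by one of finitely many fixed
walks of `H` between attachment vertices: rainbow walks of `H'` become walks of `H`, which are
rainbow once the finitely many edges of the fixed walks get fresh colours.
-/

open SimpleGraph

/-- The rainbow connection number of a graph `G`: the least `k` such that the edges of `G`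
can be coloured with colours `0, …, k-1` so that any two distinct vertices are joined by a
path whose edges receive pairwise distinct colours. -/
noncomputable def rc {V : Type*} (G : SimpleGraph V) : ℕ :=
  sInf {k : ℕ | ∃ c : Sym2 V → ℕ, (∀ e ∈ G.edgeSet, c e < k) ∧
    ∀ u v : V, u ≠ v → ∃ p : G.Walk u v, p.IsPath ∧ (p.edges.map c).Nodup}

namespace SimpleGraph

variable {V W : Type*}

def IsRainbowColoring (G : SimpleGraph V) (c : Sym2 V → ℕ) : Prop :=
  ∀ u v, u ≠ v → ∃ p : G.Walk u v, p.IsPath ∧ (p.edges.map c).Nodup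

def RainbowColorable (G : SimpleGraph V) (k : ℕ) : Prop :=
  ∃ c : Sym2 V → ℕ, (∀ e ∈ G.edgeSet, c e < k) ∧ G.IsRainbowColoring c

section RainbowConnection

variable {G : SimpleGraph V}

theorem rc_eq_sInf (G : SimpleGraph V) : rc G = sInf {k | G.RainbowColorable k} := rfl

theorem rc_le_of_rainbowColorable {k : ℕ} (h : G.RainbowColorable k) : rc G ≤ k :=
  Nat.sInf_le h

theorem rainbowColorable_rc (h : ∃ k, G.RainbowColorable k) : G.RainbowColorable (rc G) :=
  Nat.sInf_mem h

theorem rc_eq_zero_of_forall_not_rainbowColorable (h : ∀ k, ¬ G.RainbowColorable k) :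
    rc G = 0 := by
  have hempty : {k | G.RainbowColorable k} = ∅ := Set.eq_empty_of_forall_notMem h
  rw [rc_eq_sInf, hempty, Nat.sInf_empty]

theorem isRainbowColoring_of_forall_exists_walk_injOn {c : Sym2 V → ℕ}
    (h : ∀ u v, ∃ w : G.Walk u v, Set.InjOn c {e | e ∈ w.edges}) : G.IsRainbowColoring c := by
  classical
  intro u v _
  obtain ⟨w, hw⟩ := h u v
  exact ⟨w.bypass, w.bypass_isPath, w.bypass_isPath.isTrail.edges_nodup.map_on
    fun e he e' he' => hw (w.edges_bypass_subset_edges he) (w.edges_bypass_subset_edges he')⟩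

theorem IsRainbowColoring.exists_walk_nodup {c : Sym2 V → ℕ} (h : G.IsRainbowColoring c)
    (u v : V) : ∃ w : G.Walk u v, (w.edges.map c).Nodup := by
  obtain rfl | huv := eq_or_ne u v
  · exact ⟨.nil, by simp⟩
  · obtain ⟨p, -, hp⟩ := h u v huv
    exact ⟨p, hp⟩

end RainbowConnection

variable {H : SimpleGraph V} {G : SimpleGraph W}

theorem exists_walk_nodup_through (ι : H →g G) {c₀ : Sym2 V → ℕ} {k : ℕ}
    (hc₀ : ∀ e ∈ H.edgeSet, c₀ e < k) (hrain : H.IsRainbowColoring c₀) {c : Sym2 W → ℕ}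
    (hc : ∀ e ∈ H.edgeSet, c (e.map ι) = c₀ e) {u v : W} {p q : V}
    (s : G.Walk u (ι p)) (t : G.Walk (ι q) v) (hs : (s.edges.map c).Nodup)
    (ht : (t.edges.map c).Nodup) (hsk : ∀ e ∈ s.edges, k ≤ c e) (htk : ∀ e ∈ t.edges, k ≤ c e)
    (hst : ∀ e ∈ s.edges, ∀ e' ∈ t.edges, c e ≠ c e') :
    ∃ w : G.Walk u v, (w.edges.map c).Nodup := by
  obtain ⟨r, hr⟩ := hrain.exists_walk_nodup p q
  have hmid : (r.map ι).edges.map c = r.edges.map c₀ := by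
    rw [Walk.edges_map, List.map_map]
    exact List.map_congr_left fun e he => hc e (r.edges_subset_edgeSet he)
  have hlt : ∀ e ∈ r.edges, c₀ e < k := fun e he => hc₀ e (r.edges_subset_edgeSet he)
  refine ⟨s.append ((r.map ι).append t), ?_⟩
  simp only [Walk.edges_append, List.map_append, hmid, List.nodup_append, List.mem_append,
    List.mem_map]
  refine ⟨hs, ⟨hr, ht, ?_⟩, ?_⟩
  · rintro _ ⟨e₀, he₀, rfl⟩ _ ⟨e, he, rfl⟩
    have := hlt e₀ he₀
    have := htk e he
    omega
  · rintro _ ⟨e, he, rfl⟩ _ (⟨e₀, he₀, rfl⟩ | ⟨e', he', rfl⟩)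
    · have := hlt e₀ he₀
      have := hsk e he
      omega
    · exact hst e he e' he'

theorem Connected.exists_list_covering_walks (hH : H.Connected) {S : Set V} (hS : S.Finite) :
    ∃ L : List (Sym2 V), ∀ s ∈ S, ∀ t ∈ S, ∃ w : H.Walk s t, ∀ e ∈ w.edges, e ∈ L := by
  let l := hS.toFinset.toList
  refine ⟨l.flatMap fun s => l.flatMap fun t => (hH.preconnected s t).some.edges,
    fun s hs t ht => ⟨(hH.preconnected s t).some, fun e he => ?_⟩⟩
  simp only [l, List.mem_flatMap, Finset.mem_toList, Set.Finite.mem_toFinset]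
  exact ⟨s, hs, t, ht, he⟩

theorem exists_walk_retract_of_adj (ι : H ↪g G) {π : W → V} (hπ : ∀ v, π (ι v) = v)
    {S : Set V} {L : List (Sym2 V)}
    (hL : ∀ s ∈ S, ∀ t ∈ S, ∃ w : H.Walk s t, ∀ e ∈ w.edges, e ∈ L)
    (hG : ∀ u v, G.Adj u v → (∃ p q, ι p = u ∧ ι q = v) ∨ (π u ∈ S ∧ π v ∈ S))
    {u v : W} (h : G.Adj u v) :
    ∃ q : H.Walk (π u) (π v), ∀ e ∈ q.edges, e ∈ L ∨ e.map ι = s(u, v) := by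
  rcases hG u v h with ⟨p, q, rfl, rfl⟩ | ⟨hu, hv⟩
  · have hpq : H.Adj p q := ι.map_adj_iff.mp h
    refine ⟨(hpq.toWalk).copy (hπ p).symm (hπ q).symm, fun e he => Or.inr ?_⟩
    simp only [Walk.edges_copy, Adj.edges_toWalk, List.mem_singleton] at he
    simp [he]
  · obtain ⟨w, hw⟩ := hL _ hu _ hv
    exact ⟨w, fun e he => Or.inl (hw e he)⟩

theorem exists_walk_retract (ι : H ↪g G) {π : W → V} (hπ : ∀ v, π (ι v) = v)
    {S : Set V} {L : List (Sym2 V)}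
    (hL : ∀ s ∈ S, ∀ t ∈ S, ∃ w : H.Walk s t, ∀ e ∈ w.edges, e ∈ L)
    (hG : ∀ u v, G.Adj u v → (∃ p q, ι p = u ∧ ι q = v) ∨ (π u ∈ S ∧ π v ∈ S))
    {u v : W} (w : G.Walk u v) :
    ∃ q : H.Walk (π u) (π v), ∀ e ∈ q.edges, e ∈ L ∨ e.map ι ∈ w.edges := by
  induction w with
  | nil => exact ⟨.nil, by simp⟩
  | cons h w ih =>
    obtain ⟨q, hq⟩ := ih
    obtain ⟨q₀, hq₀⟩ := exists_walk_retract_of_adj ι hπ hL hG h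
    refine ⟨q₀.append q, fun e he => ?_⟩
    rw [Walk.edges_append, List.mem_append] at he
    rcases he with he | he
    · exact (hq₀ e he).imp_right fun h' => by simp [h']
    · exact (hq e he).imp_right fun h' => by simp [h']

/-- The edges of `L` get the fresh colours `m, m + 1, …`; every other edge of `H` inherits the
colour of its image. -/
theorem RainbowColorable.of_retract (ι : H ↪g G) {π : W → V} (hπ : ∀ v, π (ι v) = v)
    {S : Set V} {L : List (Sym2 V)}
    (hL : ∀ s ∈ S, ∀ t ∈ S, ∃ w : H.Walk s t, ∀ e ∈ w.edges, e ∈ L)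
    (hG : ∀ u v, G.Adj u v → (∃ p q, ι p = u ∧ ι q = v) ∨ (π u ∈ S ∧ π v ∈ S))
    {m : ℕ} (h : G.RainbowColorable m) : H.RainbowColorable (m + L.length) := by
  classical
  obtain ⟨c', hc'm, hc'⟩ := h
  let c : Sym2 V → ℕ := fun e => if e ∈ L then m + L.idxOf e else c' (e.map ι)
  refine ⟨c, fun e he => ?_, isRainbowColoring_of_forall_exists_walk_injOn fun u v => ?_⟩
  · by_cases heL : e ∈ L
    · simpa [c, heL] using List.idxOf_lt_length_iff.mpr heL
    · have : e.map ι ∈ G.edgeSet := by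
        induction e using Sym2.ind with
        | _ p q => exact ι.map_adj_iff.mpr (H.mem_edgeSet.mp he)
      simpa [c, heL] using (hc'm _ this).trans_le (Nat.le_add_right m _)
  obtain ⟨p, hp⟩ := hc'.exists_walk_nodup (ι u) (ι v)
  obtain ⟨q, hq⟩ := exists_walk_retract ι hπ hL hG p
  have hmap : ∀ e ∈ q.edges, e ∉ L → e.map ι ∈ p.edges := fun e he heL =>
    (hq e he).resolve_left heL
  have hlt : ∀ e ∈ q.edges, e ∉ L → c' (e.map ι) < m := fun e he heL =>
    hc'm _ (p.edges_subset_edgeSet (hmap e he heL))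
  refine ⟨q.copy (hπ u) (hπ v), fun e₁ he₁ e₂ he₂ hce => ?_⟩
  simp only [Set.mem_ofPred_eq, Walk.edges_copy] at he₁ he₂
  by_cases h₁ : e₁ ∈ L <;> by_cases h₂ : e₂ ∈ L
  · simp only [c, h₁, h₂, if_true, Nat.add_left_cancel_iff] at hce
    exact (List.idxOf_inj h₁).mp hce
  · have := hlt e₂ he₂ h₂
    simp only [c, h₁, h₂, if_true, if_false] at hce
    omega
  · have := hlt e₁ he₁ h₁
    simp only [c, h₁, h₂, if_true, if_false] at hce
    omega
  · simp only [c, h₁, h₂, if_false] at hce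
    exact Sym2.map.injective ι.injective
      (List.inj_on_of_nodup_map hp (hmap e₁ he₁ h₁) (hmap e₂ he₂ h₂) hce)

end SimpleGraph

namespace Subcase12

variable {V : Type*} (H : SimpleGraph V) (a b c d₀ d₁ b' : V)

/-- The new vertices `x, u₁, v₁, x₁, v₁'` are `Sum.inr 0, …, Sum.inr 4`. -/
def graph : SimpleGraph (V ⊕ Fin 5) :=
  SimpleGraph.fromRel fun u v =>
    (∃ p q, u = Sum.inl p ∧ v = Sum.inl q ∧ H.Adj p q) ∨
    (u = Sum.inl a ∧ v = Sum.inr 1) ∨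
    (u = Sum.inr 1 ∧ v = Sum.inr 0) ∨
    (u = Sum.inr 0 ∧ v = Sum.inr 2) ∨
    (u = Sum.inr 2 ∧ v = Sum.inl b) ∨
    (u = Sum.inr 0 ∧ v = Sum.inl c) ∨
    (u = Sum.inr 3 ∧ v = Sum.inl d₀) ∨
    (u = Sum.inr 3 ∧ v = Sum.inl d₁) ∨
    (u = Sum.inr 3 ∧ v = Sum.inr 4) ∨
    (u = Sum.inr 4 ∧ v = Sum.inl b')

/-- The other end of the spoke of each new vertex. -/
def anchor : Fin 5 → V := ![c, a, b, d₀, b']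

def inlEmbedding : H ↪g graph H a b c d₀ d₁ b' where
  toEmbedding := Function.Embedding.inl
  map_rel_iff' {p q} := by
    simp only [graph, fromRel_adj]
    simpa using ⟨fun h => h.2.elim id .symm, fun h => ⟨h.ne, .inl h⟩⟩

variable {H a b c d₀ d₁ b'}

theorem adj_inr_anchor (i : Fin 5) :
    (graph H a b c d₀ d₁ b').Adj (Sum.inr i) (Sum.inl (anchor a b c d₀ b' i)) := by
  fin_cases i <;> simp [graph, anchor]

theorem adj_inr_inr_iff {i j : Fin 5} :
    (graph H a b c d₀ d₁ b').Adj (Sum.inr i) (Sum.inr j) ↔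
      s(i, j) = s(0, 1) ∨ s(i, j) = s(0, 2) ∨ s(i, j) = s(3, 4) := by
  fin_cases i <;> fin_cases j <;> simp [graph]

theorem mem_of_adj_inl_inr {p : V} {i : Fin 5}
    (h : (graph H a b c d₀ d₁ b').Adj (Sum.inl p) (Sum.inr i)) :
    p ∈ ({a, b, c, d₀, d₁, b'} : Set V) := by
  simp only [graph, fromRel_adj] at h
  aesop

theorem anchor_mem (i : Fin 5) : anchor a b c d₀ b' i ∈ ({a, b, c, d₀, d₁, b'} : Set V) := by
  fin_cases i <;> simp [anchor]

theorem exists_inl_or_mem_of_adj {u v : V ⊕ Fin 5} (h : (graph H a b c d₀ d₁ b').Adj u v) :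
    (∃ p q, Sum.inl p = u ∧ Sum.inl q = v) ∨
      (Sum.elim id (anchor a b c d₀ b') u ∈ ({a, b, c, d₀, d₁, b'} : Set V) ∧
        Sum.elim id (anchor a b c d₀ b') v ∈ ({a, b, c, d₀, d₁, b'} : Set V)) := by
  rcases u with p | i <;> rcases v with q | j
  · exact .inl ⟨p, q, rfl, rfl⟩
  · exact .inr ⟨mem_of_adj_inl_inr h, anchor_mem j⟩
  · exact .inr ⟨anchor_mem i, mem_of_adj_inl_inr h.symm⟩
  · exact .inr ⟨anchor_mem i, anchor_mem j⟩

section Coloring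

variable (c₀ : Sym2 V → ℕ) (k : ℕ)

def spokeColor (i : Fin 5) : ℕ := if i < 3 then k else k + 1

def colorPair : V ⊕ Fin 5 → V ⊕ Fin 5 → ℕ
  | .inl p, .inl q => c₀ s(p, q)
  | .inl _, .inr i | .inr i, .inl _ => spokeColor k i
  | .inr i, .inr j => if s(i, j) = s(0, 2) then k + 2 else k + 1

theorem colorPair_comm (u v : V ⊕ Fin 5) : colorPair c₀ k u v = colorPair c₀ k v u := by
  rcases u with p | i <;> rcases v with q | j <;> simp [colorPair, Sym2.eq_swap]

def color : Sym2 (V ⊕ Fin 5) → ℕ := Sym2.lift ⟨colorPair c₀ k, colorPair_comm c₀ k⟩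

variable {c₀ k}

theorem le_spokeColor (i : Fin 5) : k ≤ spokeColor k i := by
  unfold spokeColor
  split_ifs <;> omega

@[simp]
theorem color_inr_inl (i : Fin 5) (p : V) :
    color c₀ k s(Sum.inr i, Sum.inl p) = spokeColor k i := rfl

@[simp]
theorem color_inl_inr (p : V) (i : Fin 5) :
    color c₀ k s(Sum.inl p, Sum.inr i) = spokeColor k i := rfl

theorem color_map_inl (e : Sym2 V) : color c₀ k (e.map Sum.inl) = c₀ e := by
  induction e using Sym2.ind with
  | _ p q => simp [color, colorPair]

theorem color_lt (hc₀ : ∀ e ∈ H.edgeSet, c₀ e < k) :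
    ∀ e ∈ (graph H a b c d₀ d₁ b').edgeSet, color c₀ k e < k + 3 := by
  intro e he
  induction e using Sym2.ind with
  | _ u v =>
    rcases u with p | i <;> rcases v with q | j
    · have hpq : H.Adj p q := (inlEmbedding H a b c d₀ d₁ b').map_adj_iff.mp he
      simpa [color, colorPair] using (hc₀ _ hpq).trans (by omega : k < k + 3)
    all_goals simp only [color, colorPair, spokeColor, Sym2.lift_mk]; split_ifs <;> omega

theorem exists_walk_nodup_through_inl (hc₀ : ∀ e ∈ H.edgeSet, c₀ e < k)
    (hrain : H.IsRainbowColoring c₀) {u v : V ⊕ Fin 5} {p q : V}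
    (s : (graph H a b c d₀ d₁ b').Walk u (Sum.inl p))
    (t : (graph H a b c d₀ d₁ b').Walk (Sum.inl q) v)
    (hs : (s.edges.map (color c₀ k)).Nodup) (ht : (t.edges.map (color c₀ k)).Nodup)
    (hsk : ∀ e ∈ s.edges, k ≤ color c₀ k e) (htk : ∀ e ∈ t.edges, k ≤ color c₀ k e)
    (hst : ∀ e ∈ s.edges, ∀ e' ∈ t.edges, color c₀ k e ≠ color c₀ k e') :
    ∃ w : (graph H a b c d₀ d₁ b').Walk u v, (w.edges.map (color c₀ k)).Nodup :=
  exists_walk_nodup_through (inlEmbedding H a b c d₀ d₁ b').toHom hc₀ hrain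
    (fun e _ => color_map_inl e) s t hs ht hsk htk hst

theorem exists_walk_nodup_inr_inr (hc₀ : ∀ e ∈ H.edgeSet, c₀ e < k)
    (hrain : H.IsRainbowColoring c₀) (i j : Fin 5) :
    ∃ w : (graph H a b c d₀ d₁ b').Walk (Sum.inr i) (Sum.inr j),
      (w.edges.map (color c₀ k)).Nodup := by
  by_cases hij : spokeColor k i = spokeColor k j
  swap
  · exact exists_walk_nodup_through_inl hc₀ hrain (adj_inr_anchor i).toWalk
      (adj_inr_anchor j).toWalk.reverse (by simp) (by simp) (by simp [le_spokeColor])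
      (by simp [le_spokeColor]) (by simpa using hij)
  wlog hle : i ≤ j generalizing i j
  · obtain ⟨w, hw⟩ := this j i hij.symm (le_of_not_ge hle)
    exact ⟨w.reverse, by simpa using hw⟩
  obtain rfl | hne := eq_or_ne i j
  · exact ⟨.nil, by simp⟩
  by_cases hadj : (graph H a b c d₀ d₁ b').Adj (Sum.inr i) (Sum.inr j)
  · exact ⟨hadj.toWalk, by simp⟩
  obtain ⟨rfl, rfl⟩ : i = 1 ∧ j = 2 := by
    fin_cases i <;> fin_cases j <;> simp_all [adj_inr_inr_iff, spokeColor]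
  have h10 : (graph H a b c d₀ d₁ b').Adj (Sum.inr 1) (Sum.inr 0) :=
    adj_inr_inr_iff.mpr (by simp [Sym2.eq_swap])
  have h02 : (graph H a b c d₀ d₁ b').Adj (Sum.inr 0) (Sum.inr 2) := adj_inr_inr_iff.mpr (by simp)
  exact ⟨.cons h10 h02.toWalk, by simp [color, colorPair, Sym2.eq_swap]⟩

theorem rainbowColorable (hc₀ : ∀ e ∈ H.edgeSet, c₀ e < k) (hrain : H.IsRainbowColoring c₀) :
    (graph H a b c d₀ d₁ b').RainbowColorable (k + 3) := by
  refine ⟨color c₀ k, color_lt hc₀, isRainbowColoring_of_forall_exists_walk_injOn fun u v => ?_⟩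
  suffices ∃ w : (graph H a b c d₀ d₁ b').Walk u v, (w.edges.map (color c₀ k)).Nodup by
    obtain ⟨w, hw⟩ := this
    exact ⟨w, fun e he e' he' => List.inj_on_of_nodup_map hw he he'⟩
  rcases u with p | i <;> rcases v with q | j
  · exact exists_walk_nodup_through_inl hc₀ hrain .nil .nil (by simp) (by simp) (by simp)
      (by simp) (by simp)
  · exact exists_walk_nodup_through_inl hc₀ hrain .nil (adj_inr_anchor j).toWalk.reverse
      (by simp) (by simp) (by simp) (by simp [le_spokeColor]) (by simp)
  · exact exists_walk_nodup_through_inl hc₀ hrain (adj_inr_anchor i).toWalk .nil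
      (by simp) (by simp) (by simp [le_spokeColor]) (by simp) (by simp)
  · exact exists_walk_nodup_inr_inr hc₀ hrain i j

end Coloring

end Subcase12

theorem rc_subcase12_general {V : Type*} (H : SimpleGraph V) (hH : H.Connected)
    (a b c d₀ d₁ b' : V) :
    rc (SimpleGraph.fromRel (fun u v : V ⊕ Fin 5 =>
        (∃ p q, u = Sum.inl p ∧ v = Sum.inl q ∧ H.Adj p q) ∨
        (u = Sum.inl a ∧ v = Sum.inr 1) ∨
        (u = Sum.inr 1 ∧ v = Sum.inr 0) ∨
        (u = Sum.inr 0 ∧ v = Sum.inr 2) ∨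
        (u = Sum.inr 2 ∧ v = Sum.inl b) ∨
        (u = Sum.inr 0 ∧ v = Sum.inl c) ∨
        (u = Sum.inr 3 ∧ v = Sum.inl d₀) ∨
        (u = Sum.inr 3 ∧ v = Sum.inl d₁) ∨
        (u = Sum.inr 3 ∧ v = Sum.inr 4) ∨
        (u = Sum.inr 4 ∧ v = Sum.inl b'))) ≤ rc H + 3 := by
  change rc (Subcase12.graph H a b c d₀ d₁ b') ≤ rc H + 3
  by_cases hfin : ∃ k, H.RainbowColorable k
  · obtain ⟨c₀, hc₀, hrain⟩ := rainbowColorable_rc hfin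
    exact rc_le_of_rainbowColorable (Subcase12.rainbowColorable hc₀ hrain)
  · obtain ⟨L, hL⟩ := hH.exists_list_covering_walks (Set.toFinite {a, b, c, d₀, d₁, b'})
    have hnot : ∀ m, ¬ (Subcase12.graph H a b c d₀ d₁ b').RainbowColorable m := fun m hm =>
      hfin ⟨_, hm.of_retract (Subcase12.inlEmbedding H a b c d₀ d₁ b') (fun _ => rfl) hL
        fun _ _ => Subcase12.exists_inl_or_mem_of_adj⟩
    rw [rc_eq_zero_of_forall_not_rainbowColorable hnot]
    omega

/-- Subcase 1.2.  Add new vertices `x = Sum.inr 0`, `u₁ = Sum.inr 1`, `v₁ = Sum.inr 2`,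
`x₁ = Sum.inr 3`, `v₁' = Sum.inr 4` to a connected graph `H`, with edges
`a u₁, u₁ x, x v₁, v₁ b` for distinct `a, b ∈ H`, an edge `e₀` joining `x` to a vertex
`c` of `H`, two edges joining `x₁` to distinct vertices `d₀, d₁` of `H`, and the edges
`x₁ v₁'` and `v₁' b'` with `b' ∈ H`.  Then `rc(H') ≤ rc(H) + 3`. -/
theorem rc_subcase12 {V : Type*} (H : SimpleGraph V) (hH : H.Connected)
    (a b c d₀ d₁ b' : V) (hab : a ≠ b) (hd : d₀ ≠ d₁) :
    rc (SimpleGraph.fromRel (fun u v : V ⊕ Fin 5 =>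
        (∃ p q, u = Sum.inl p ∧ v = Sum.inl q ∧ H.Adj p q) ∨
        (u = Sum.inl a ∧ v = Sum.inr 1) ∨
        (u = Sum.inr 1 ∧ v = Sum.inr 0) ∨
        (u = Sum.inr 0 ∧ v = Sum.inr 2) ∨
        (u = Sum.inr 2 ∧ v = Sum.inl b) ∨
        (u = Sum.inr 0 ∧ v = Sum.inl c) ∨
        (u = Sum.inr 3 ∧ v = Sum.inl d₀) ∨
        (u = Sum.inr 3 ∧ v = Sum.inl d₁) ∨
        (u = Sum.inr 3 ∧ v = Sum.inr 4) ∨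
        (u = Sum.inr 4 ∧ v = Sum.inl b'))) ≤ rc H + 3 :=
  rc_subcase12_general H hH a b c d₀ d₁ b'
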